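/- arXiv:2006.10968 — 7 statements merged into one kernel-verified Lean document; each statement's English description precedes it below -/
import Mathlib

section
/- Let η > 0, c > 0, σ < 1, τ > σ, and ρ(w) = (η(τ−σ)/(c^τ Γ(1−σ))) w^{−1−τ} γ(τ−σ, c w). If σ < 0 then ∫₀^∞ ρ(w) dw = η(τ−σ)/(−στ) < ∞, and if σ ≥ 0 then ∫₀^∞ ρ(w) dw = ∞. -/
open Real MeasureTheory
open scoped ENNReal

/-- Lower incomplete gamma function. -/
noncomputable def lowerGamma (s x : ℝ) : ℝ := ∫ t in (0:ℝ)..x, t ^ (s - 1) * Real.exp (-t)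

open Set ENNReal in
private lemma ggp_lint_rpow {a p : ℝ} (hp : p < -1) (ha : 0 < a) :
    ∫⁻ x in Set.Ioi a, ENNReal.ofReal (x ^ p) = ENNReal.ofReal (a ^ (p + 1) / (-(p + 1))) := by
  rw [← ofReal_integral_eq_lintegral_ofReal (integrableOn_Ioi_rpow_of_lt hp ha)]
  · rw [integral_Ioi_rpow_of_lt hp ha]
    have h1 : p + 1 < 0 := by linarith
    congr 1
    rw [div_neg, neg_div]
  · filter_upwards [ae_restrict_mem measurableSet_Ioi] with x hx
    exact Real.rpow_nonneg (le_of_lt (ha.trans hx)) p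

open Set ENNReal in
private lemma ggp_lint_rpow_top {p : ℝ} (hp : p ≤ -1) :
    ∫⁻ t in Set.Ioc (0:ℝ) 1, ENNReal.ofReal (t ^ p) = ⊤ := by
  by_contra h
  have hmeas : AEStronglyMeasurable (fun t : ℝ => t ^ p)
      (volume.restrict (Set.Ioc (0:ℝ) 1)) :=
    (measurable_id.pow_const p).aestronglyMeasurable
  have hnn : 0 ≤ᵐ[volume.restrict (Set.Ioc (0:ℝ) 1)] fun t : ℝ => t ^ p := by
    filter_upwards [ae_restrict_mem measurableSet_Ioc] with x hx
    exact Real.rpow_nonneg hx.1.le p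
  have hint : IntegrableOn (fun t : ℝ => t ^ p) (Set.Ioc (0:ℝ) 1) :=
    ⟨hmeas, (hasFiniteIntegral_iff_ofReal hnn).2 (lt_top_iff_ne_top.2 h)⟩
  have := (hint.mono_set Set.Ioo_subset_Ioc_self)
  rw [intervalIntegral.integrableOn_Ioo_rpow_iff one_pos] at this
  linarith

open Set ENNReal in
private lemma ggp_lint_Gamma {s : ℝ} (hs : 0 < s) :
    ∫⁻ t in Set.Ioi (0:ℝ), ENNReal.ofReal (t ^ (s - 1) * Real.exp (-t))
      = ENNReal.ofReal (Real.Gamma s) := by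
  have he : ∀ t : ℝ, t ^ (s - 1) * Real.exp (-t) = Real.exp (-t) * t ^ (s - 1) :=
    fun t => mul_comm _ _
  simp_rw [he]
  rw [Real.Gamma_eq_integral hs,
    ← ofReal_integral_eq_lintegral_ofReal (Real.GammaIntegral_convergent hs)]
  filter_upwards [ae_restrict_mem measurableSet_Ioi] with x hx
  exact mul_nonneg (Real.exp_nonneg _) (Real.rpow_nonneg hx.le _)

open Set ENNReal in
private lemma ggp_ofReal_lowerGamma {s x : ℝ} (hs : 0 < s) (hx : 0 ≤ x) :
    ENNReal.ofReal (∫ t in (0:ℝ)..x, t ^ (s - 1) * Real.exp (-t))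
      = ∫⁻ t in Set.Ioc (0:ℝ) x, ENNReal.ofReal (t ^ (s - 1) * Real.exp (-t)) := by
  rw [intervalIntegral.integral_of_le hx]
  have hint : IntegrableOn (fun t : ℝ => t ^ (s - 1) * Real.exp (-t)) (Set.Ioc 0 x) := by
    refine (((Real.GammaIntegral_convergent hs).mono_set Set.Ioc_subset_Ioi_self).congr_fun
      (fun t ht => mul_comm _ _) measurableSet_Ioc)
  rw [← ofReal_integral_eq_lintegral_ofReal hint]
  filter_upwards [ae_restrict_mem measurableSet_Ioc] with t ht
  exact mul_nonneg (Real.rpow_nonneg ht.1.le _) (Real.exp_nonneg _)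

open Set ENNReal in
private lemma ggp_key_swap (c σ τ : ℝ) (hc : 0 < c) (hτσ : σ < τ) (hτ : 0 < τ) :
    ∫⁻ w in Set.Ioi (0:ℝ), ENNReal.ofReal (w ^ (-1 - τ)) *
        ENNReal.ofReal (∫ t in (0:ℝ)..(c * w), t ^ (τ - σ - 1) * Real.exp (-t))
      = ENNReal.ofReal (c ^ τ / τ) *
          ∫⁻ t in Set.Ioi (0:ℝ), ENNReal.ofReal (t ^ (-σ - 1) * Real.exp (-t)) := by
  set s := τ - σ with hs_def
  have hs : 0 < s := by simp [hs_def]; linarith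
  set g : ℝ → ℝ≥0∞ := fun t => ENNReal.ofReal (t ^ (s - 1) * Real.exp (-t)) with hg_def
  set F : ℝ × ℝ → ℝ≥0∞ := fun p =>
    ENNReal.ofReal (p.1 ^ (-1 - τ)) * g p.2 *
      Set.indicator {q : ℝ × ℝ | q.2 ≤ c * q.1} (fun _ => 1) p with hF_def
  have hFmeas : Measurable F := by
    apply Measurable.mul
    · exact ((measurable_fst.pow_const _).ennreal_ofReal).mul
        (((measurable_snd.pow_const _).mul
          (measurable_snd.neg.exp)).ennreal_ofReal)
    · exact measurable_const.indicator (measurableSet_le measurable_snd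
        (measurable_fst.const_mul c))
  -- step 1: LHS as double integral
  have step1 : ∫⁻ w in Set.Ioi (0:ℝ), ENNReal.ofReal (w ^ (-1 - τ)) *
        ENNReal.ofReal (∫ t in (0:ℝ)..(c * w), t ^ (s - 1) * Real.exp (-t))
      = ∫⁻ w in Set.Ioi (0:ℝ), ∫⁻ t in Set.Ioi (0:ℝ), F (w, t) := by
    refine setLIntegral_congr_fun measurableSet_Ioi ?_
    intro w hw
    beta_reduce
    rw [ggp_ofReal_lowerGamma hs (mul_pos hc hw).le]
    have hind : ∀ t : ℝ, F (w, t) =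
        Set.indicator (Set.Iic (c * w)) (fun t => ENNReal.ofReal (w ^ (-1 - τ)) * g t) t := by
      intro t
      by_cases h : t ≤ c * w <;>
        simp [hF_def, Set.indicator, h, mul_comm, mul_assoc]
    simp_rw [hind]
    rw [lintegral_indicator measurableSet_Iic, Measure.restrict_restrict measurableSet_Iic,
      Set.Iic_inter_Ioi, lintegral_const_mul' _ _ ENNReal.ofReal_ne_top]
  have swap : ∫⁻ w in Set.Ioi (0:ℝ), ∫⁻ t in Set.Ioi (0:ℝ), F (w, t)
      = ∫⁻ t in Set.Ioi (0:ℝ), ∫⁻ w in Set.Ioi (0:ℝ), F (w, t) :=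
    lintegral_lintegral_swap hFmeas.aemeasurable
  have step3 : ∫⁻ t in Set.Ioi (0:ℝ), ∫⁻ w in Set.Ioi (0:ℝ), F (w, t)
      = ∫⁻ t in Set.Ioi (0:ℝ),
          ENNReal.ofReal (c ^ τ / τ) * ENNReal.ofReal (t ^ (-σ - 1) * Real.exp (-t)) := by
    refine setLIntegral_congr_fun measurableSet_Ioi ?_
    intro t ht
    beta_reduce
    have ht : (0:ℝ) < t := ht
    have htc : 0 < t / c := div_pos ht hc
    have hind : ∀ w : ℝ, F (w, t) =
        Set.indicator (Set.Ici (t / c)) (fun w => ENNReal.ofReal (w ^ (-1 - τ))) w * g t := by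
      intro w
      have hiff : t ≤ c * w ↔ t / c ≤ w := by
        rw [div_le_iff₀ hc, mul_comm]
      by_cases h : t ≤ c * w
      · have h' : t / c ≤ w := hiff.1 h
        simp [hF_def, Set.indicator, h, h']
      · have h' : ¬ t / c ≤ w := fun hh => h (hiff.2 hh)
        simp [hF_def, Set.indicator, h, h']
    simp_rw [hind]
    rw [lintegral_mul_const' _ _ ENNReal.ofReal_ne_top,
      lintegral_indicator measurableSet_Ici,
      Measure.restrict_restrict measurableSet_Ici]
    have hsub : Set.Ici (t / c) ∩ Set.Ioi 0 = Set.Ici (t / c) :=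
      Set.inter_eq_left.2 fun x hx => lt_of_lt_of_le htc hx
    rw [hsub, ← restrict_Ioi_eq_restrict_Ici, ggp_lint_rpow (by linarith) htc]
    have e1 : (-1 - τ + 1 : ℝ) = -τ := by ring
    rw [e1, neg_neg]
    rw [← ENNReal.ofReal_mul (by positivity), ← ENNReal.ofReal_mul (by positivity)]
    congr 1
    have e2 : (t / c) ^ (-τ) = t ^ (-τ) * c ^ τ := by
      rw [Real.div_rpow ht.le hc.le, Real.rpow_neg hc.le, div_eq_mul_inv, inv_inv]
    have e3 : t ^ (-τ) * t ^ (s - 1) = t ^ (-σ - 1) := by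
      rw [← Real.rpow_add ht]
      congr 1
      rw [hs_def]; ring
    rw [e2, ← e3]
    ring
  rw [step1, swap, step3, lintegral_const_mul' _ _ ENNReal.ofReal_ne_top]

theorem ggp_activity (η c σ τ : ℝ) (hη : 0 < η) (hc : 0 < c)
    (hσ : σ < 1) (hτσ : σ < τ) (hτ : 0 < τ) :
    (σ < 0 →
      ∫⁻ w in Set.Ioi (0:ℝ), ENNReal.ofReal
          ((η * (τ - σ) / (c ^ τ * Real.Gamma (1 - σ))) * w ^ (-1 - τ) *
            lowerGamma (τ - σ) (c * w))
        = ENNReal.ofReal (η * (τ - σ) / (-σ * τ))) ∧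
    (0 ≤ σ →
      ∫⁻ w in Set.Ioi (0:ℝ), ENNReal.ofReal
          ((η * (τ - σ) / (c ^ τ * Real.Gamma (1 - σ))) * w ^ (-1 - τ) *
            lowerGamma (τ - σ) (c * w))
        = ⊤) := by
  have hcτ : (0:ℝ) < c ^ τ := Real.rpow_pos_of_pos hc τ
  have hΓ : 0 < Real.Gamma (1 - σ) := Real.Gamma_pos_of_pos (by linarith)
  set K : ℝ := η * (τ - σ) / (c ^ τ * Real.Gamma (1 - σ)) with hK_def
  have hK : 0 < K := by
    apply div_pos (by nlinarith) (by positivity)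
  have main : ∫⁻ w in Set.Ioi (0:ℝ),
        ENNReal.ofReal (K * w ^ (-1 - τ) * lowerGamma (τ - σ) (c * w))
      = ENNReal.ofReal K * (ENNReal.ofReal (c ^ τ / τ) *
          ∫⁻ t in Set.Ioi (0:ℝ), ENNReal.ofReal (t ^ (-σ - 1) * Real.exp (-t))) := by
    rw [← ggp_key_swap c σ τ hc hτσ hτ, ← lintegral_const_mul' _ _ ENNReal.ofReal_ne_top]
    refine setLIntegral_congr_fun measurableSet_Ioi ?_
    intro w hw
    beta_reduce
    have hw : (0:ℝ) < w := hw
    rw [lowerGamma, ENNReal.ofReal_mul (by positivity), ENNReal.ofReal_mul hK.le, mul_assoc]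
  constructor
  · intro hσ0
    have hG : ∫⁻ t in Set.Ioi (0:ℝ), ENNReal.ofReal (t ^ (-σ - 1) * Real.exp (-t))
        = ENNReal.ofReal (Real.Gamma (-σ)) := ggp_lint_Gamma (by linarith)
    rw [main, hG, ← ENNReal.ofReal_mul (by positivity), ← ENNReal.ofReal_mul hK.le]
    congr 1
    have hΓ1 : Real.Gamma (1 - σ) = -σ * Real.Gamma (-σ) := by
      rw [show (1 - σ : ℝ) = -σ + 1 by ring, Real.Gamma_add_one (by linarith)]
    have hΓσ : 0 < Real.Gamma (-σ) := Real.Gamma_pos_of_pos (by linarith)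
    rw [hK_def, hΓ1]
    have hσne : σ ≠ 0 := by linarith
    field_simp
  · intro hσ0
    have hG : ∫⁻ t in Set.Ioi (0:ℝ), ENNReal.ofReal (t ^ (-σ - 1) * Real.exp (-t)) = ⊤ := by
      rw [eq_top_iff]
      calc (⊤ : ℝ≥0∞) = ENNReal.ofReal (Real.exp (-1)) *
              ∫⁻ t in Set.Ioc (0:ℝ) 1, ENNReal.ofReal (t ^ (-σ - 1)) := by
            rw [ggp_lint_rpow_top (by linarith : -σ - 1 ≤ -1),
              ENNReal.mul_top (ENNReal.ofReal_pos.2 (Real.exp_pos _)).ne']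
        _ = ∫⁻ t in Set.Ioc (0:ℝ) 1,
              ENNReal.ofReal (Real.exp (-1)) * ENNReal.ofReal (t ^ (-σ - 1)) :=
            (lintegral_const_mul' _ _ ENNReal.ofReal_ne_top).symm
        _ ≤ ∫⁻ t in Set.Ioc (0:ℝ) 1, ENNReal.ofReal (t ^ (-σ - 1) * Real.exp (-t)) := by
            refine lintegral_mono_ae ?_
            filter_upwards [ae_restrict_mem measurableSet_Ioc] with t ht
            rw [← ENNReal.ofReal_mul (Real.exp_nonneg _)]
            refine ENNReal.ofReal_le_ofReal ?_
            have h1 : Real.exp (-1) ≤ Real.exp (-t) := Real.exp_le_exp.2 (by linarith [ht.2])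
            have h2 : (0:ℝ) ≤ t ^ (-σ - 1) := Real.rpow_nonneg ht.1.le _
            calc Real.exp (-1) * t ^ (-σ - 1) = t ^ (-σ - 1) * Real.exp (-1) := mul_comm _ _
              _ ≤ t ^ (-σ - 1) * Real.exp (-t) := mul_le_mul_of_nonneg_left h1 h2
        _ ≤ ∫⁻ t in Set.Ioi (0:ℝ), ENNReal.ofReal (t ^ (-σ - 1) * Real.exp (-t)) :=
            lintegral_mono_set Set.Ioc_subset_Ioi_self
    rw [main, hG, ENNReal.mul_top (ENNReal.ofReal_pos.2 (by positivity)).ne',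
      ENNReal.mul_top (ENNReal.ofReal_pos.2 hK).ne']
end

section
/- Let η > 0, c > 0, 0 ≤ σ < 1, τ > σ, and ρ(w) = (η(τ−σ)/(c^τ Γ(1−σ))) w^{−1−τ} γ(τ−σ, c w). Then the function k(w) = w ρ(w) is non-increasing on (0, ∞). -/
open Real MeasureTheory

lemma aux_integrable {s w x : ℝ} (hs : 0 < s) (hw : 0 ≤ w) (hx : 0 ≤ x) :
    IntervalIntegrable (fun u : ℝ => u ^ (s - 1) * Real.exp (-(w * u))) volume 0 x := by
  apply IntervalIntegrable.mono_fun' (g := fun u : ℝ => u ^ (s - 1))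
    (intervalIntegral.intervalIntegrable_rpow' (by linarith))
  · apply ContinuousOn.aestronglyMeasurable _ measurableSet_uIoc
    apply ContinuousOn.mul
    · exact ContinuousOn.rpow_const continuousOn_id
        (fun u hu => by
          rw [Set.uIoc_of_le hx] at hu
          exact Or.inl (ne_of_gt hu.1))
    · exact Continuous.continuousOn (by continuity)
  · filter_upwards [MeasureTheory.ae_restrict_mem measurableSet_uIoc] with u hu
    rw [Set.uIoc_of_le hx] at hu
    have hu0 : 0 ≤ u := le_of_lt hu.1
    have h1 : Real.exp (-(w * u)) ≤ 1 := by
      rw [Real.exp_le_one_iff]; nlinarith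
    have h2 : 0 ≤ u ^ (s - 1) := Real.rpow_nonneg hu0 _
    have habs : |u ^ (s - 1) * Real.exp (-(w * u))| = u ^ (s - 1) * Real.exp (-(w * u)) :=
      abs_of_nonneg (by positivity)
    simp only [Real.norm_eq_abs, habs]
    nlinarith [Real.exp_pos (-(w * u))]

lemma lowerGamma_scale {s c w : ℝ} (hs : 0 < s) (hc : 0 < c) (hw : 0 < w) :
    lowerGamma s (c * w) =
      w ^ s * ∫ u in (0:ℝ)..c, u ^ (s - 1) * Real.exp (-(w * u)) := by
  unfold lowerGamma
  have h1 := intervalIntegral.smul_integral_comp_mul_left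
    (a := (0:ℝ)) (b := c) (fun t : ℝ => t ^ (s - 1) * Real.exp (-t)) w
  simp only [mul_zero] at h1
  rw [mul_comm c w, ← h1]
  simp only [smul_eq_mul]
  have h2 : ∀ u ∈ Set.uIcc (0:ℝ) c,
      (w * u) ^ (s - 1) * Real.exp (-(w * u))
        = w ^ (s - 1) * (u ^ (s - 1) * Real.exp (-(w * u))) := by
    intro u hu
    rw [Set.uIcc_of_le hc.le] at hu
    rw [Real.mul_rpow hw.le hu.1]
    ring
  rw [intervalIntegral.integral_congr h2, intervalIntegral.integral_const_mul, ← mul_assoc]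
  congr 1
  rw [mul_comm, ← Real.rpow_add_one (ne_of_gt hw)]
  congr 1
  ring

theorem ggp_w_rho_antitone (η c σ τ : ℝ) (hη : 0 < η) (hc : 0 < c)
    (hσ0 : 0 ≤ σ) (hσ : σ < 1) (hτσ : σ < τ) :
    AntitoneOn (fun w : ℝ => w *
        ((η * (τ - σ) / (c ^ τ * Real.Gamma (1 - σ))) * w ^ (-1 - τ) *
          lowerGamma (τ - σ) (c * w)))
      (Set.Ioi 0) := by
  set s : ℝ := τ - σ with hs_def
  have hs : 0 < s := by simp [hs_def]; linarith
  set C : ℝ := η * (τ - σ) / (c ^ τ * Real.Gamma (1 - σ)) with hC_def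
  have hC : 0 ≤ C := by
    apply div_nonneg
    · nlinarith
    · have := Real.Gamma_pos_of_pos (show (0:ℝ) < 1 - σ by linarith)
      have := Real.rpow_pos_of_pos hc τ
      positivity
  have key : ∀ w : ℝ, 0 < w →
      w * (C * w ^ (-1 - τ) * lowerGamma s (c * w))
        = C * (w ^ (-σ) * ∫ u in (0:ℝ)..c, u ^ (s - 1) * Real.exp (-(w * u))) := by
    intro w hw
    rw [lowerGamma_scale hs hc hw]
    have : w * (C * w ^ (-1 - τ) * (w ^ s * ∫ u in (0:ℝ)..c,
        u ^ (s - 1) * Real.exp (-(w * u))))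
        = C * ((w * (w ^ (-1 - τ) * w ^ s)) * ∫ u in (0:ℝ)..c,
            u ^ (s - 1) * Real.exp (-(w * u))) := by ring
    rw [this]
    congr 2
    rw [← Real.rpow_add hw, mul_comm, ← Real.rpow_add_one (ne_of_gt hw)]
    congr 1
    simp [hs_def]
    ring
  intro a ha b hb hab
  simp only [Set.mem_Ioi] at ha hb
  simp only
  rw [key a ha, key b hb]
  apply mul_le_mul_of_nonneg_left _ hC
  have hGb : 0 ≤ ∫ u in (0:ℝ)..c, u ^ (s - 1) * Real.exp (-(b * u)) := by
    apply intervalIntegral.integral_nonneg hc.le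
    intro u hu
    have := Real.exp_pos (-(b * u))
    have := Real.rpow_nonneg hu.1 (s - 1)
    positivity
  apply mul_le_mul
  · exact Real.rpow_le_rpow_of_nonpos ha hab (by linarith)
  · apply intervalIntegral.integral_mono_on hc.le
      (aux_integrable hs hb.le hc.le) (aux_integrable hs ha.le hc.le)
    intro u hu
    apply mul_le_mul_of_nonneg_left _ (Real.rpow_nonneg hu.1 _)
    apply Real.exp_le_exp.mpr
    nlinarith [hu.1]
  · exact hGb
  · exact (Real.rpow_pos_of_pos ha _).le
end

section
/- Let η > 0, c > 0, 0 < τ ≤ σ < 1, and ρ(w) = (η/(c^τ Γ(1−σ))) w^{−1−τ} [γ(τ−σ+1, c w) + (c w)^{τ−σ} e^{−c w}]. Then the function k(w) = w ρ(w) is monotone decreasing on (0, ∞). (Hint: with g(w) = γ(τ−σ+1, c w) + (c w)^{τ−σ} e^{−c w}, one has g'(w) = (τ−σ) c (c w)^{τ−σ−1} e^{−c w} ≤ 0.) -/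
open Real MeasureTheory

lemma intInt_rpow_exp {r : ℝ} (hr : -1 < r) (a b : ℝ) :
    IntervalIntegrable (fun t : ℝ => t ^ r * Real.exp (-t)) volume a b :=
  (intervalIntegral.intervalIntegrable_rpow' hr).mul_continuousOn
    (Continuous.continuousOn (by continuity))

lemma lowerGamma_nonneg {s x : ℝ} (hx : 0 ≤ x) : 0 ≤ lowerGamma s x := by
  apply intervalIntegral.integral_nonneg hx
  intro t ht
  exact mul_nonneg (Real.rpow_nonneg ht.1 _) (Real.exp_nonneg _)

lemma g_anti {s x y : ℝ} (hs : s ≤ 0) (hs' : -1 < s) (hx : 0 < x) (hxy : x ≤ y) :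
    lowerGamma (s + 1) y + y ^ s * Real.exp (-y) ≤
      lowerGamma (s + 1) x + x ^ s * Real.exp (-x) := by
  have hcont : ∀ r : ℝ, ContinuousOn (fun t : ℝ => t ^ r * Real.exp (-t)) (Set.uIcc x y) := by
    intro r
    apply ContinuousOn.mul _ (Continuous.continuousOn (by continuity))
    intro t ht
    have ht0 : 0 < t := lt_of_lt_of_le hx (by
      rw [Set.uIcc_of_le hxy] at ht; exact ht.1)
    exact (Real.continuousAt_rpow_const t r (Or.inl ht0.ne')).continuousWithinAt
  -- split lowerGamma
  have hsplit : lowerGamma (s + 1) y =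
      lowerGamma (s + 1) x + ∫ t in x..y, t ^ s * Real.exp (-t) := by
    unfold lowerGamma
    simp only [add_sub_cancel_right]
    rw [← intervalIntegral.integral_add_adjacent_intervals
      (intInt_rpow_exp hs' 0 x) (intInt_rpow_exp hs' x y)]
  -- FTC for h(t) = t^s * exp(-t)
  have hftc : ∫ t in x..y, (s * (t ^ (s - 1) * Real.exp (-t)) - t ^ s * Real.exp (-t))
      = y ^ s * Real.exp (-y) - x ^ s * Real.exp (-x) := by
    apply intervalIntegral.integral_eq_sub_of_hasDerivAt
    · intro t ht
      have ht0 : 0 < t := lt_of_lt_of_le hx (by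
        rw [Set.uIcc_of_le hxy] at ht; exact ht.1)
      have h1 : HasDerivAt (fun u : ℝ => u ^ s) (s * t ^ (s - 1)) t :=
        Real.hasDerivAt_rpow_const (Or.inl ht0.ne')
      have h2 : HasDerivAt (fun u : ℝ => Real.exp (-u)) (-Real.exp (-t)) t := by
        simpa [Function.comp_def] using (Real.hasDerivAt_exp (-t)).comp t (hasDerivAt_neg t)
      have : HasDerivAt (fun u : ℝ => u ^ s * Real.exp (-u)) _ t := h1.mul h2
      refine this.congr_deriv ?_
      ring
    · apply ContinuousOn.intervalIntegrable
      exact (continuousOn_const.mul (hcont (s - 1))).sub (hcont s)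
  -- the combined integral
  have hadd : (∫ t in x..y, t ^ s * Real.exp (-t))
      + ∫ t in x..y, (s * (t ^ (s - 1) * Real.exp (-t)) - t ^ s * Real.exp (-t))
      = ∫ t in x..y, s * (t ^ (s - 1) * Real.exp (-t)) := by
    rw [← intervalIntegral.integral_add (intInt_rpow_exp hs' x y)
      (ContinuousOn.intervalIntegrable
        ((continuousOn_const.mul (hcont (s - 1))).sub (hcont s)) : IntervalIntegrable (fun t : ℝ => s * (t ^ (s - 1) * Real.exp (-t)) - t ^ s * Real.exp (-t)) volume x y)]
    congr 1; funext t; ring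
  have hnonpos : (∫ t in x..y, s * (t ^ (s - 1) * Real.exp (-t))) ≤ 0 := by
    have h0 : 0 ≤ ∫ t in x..y, -(s * (t ^ (s - 1) * Real.exp (-t))) := by
      apply intervalIntegral.integral_nonneg hxy
      intro t ht
      have ht0 : 0 ≤ t := le_of_lt (lt_of_lt_of_le hx ht.1)
      have := mul_nonpos_of_nonpos_of_nonneg hs
        (mul_nonneg (Real.rpow_nonneg ht0 (s - 1)) (Real.exp_nonneg (-t)))
      linarith
    rw [intervalIntegral.integral_neg] at h0
    linarith
  rw [hftc] at hadd
  linarith [hsplit, hadd, hnonpos]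

theorem ggp_w_rho_strictAnti (η c σ τ : ℝ) (hη : 0 < η) (hc : 0 < c)
    (hτ : 0 < τ) (hτσ : τ ≤ σ) (hσ : σ < 1) :
    StrictAntiOn (fun w : ℝ => w *
        ((η / (c ^ τ * Real.Gamma (1 - σ))) * w ^ (-1 - τ) *
          (lowerGamma (τ - σ + 1) (c * w) + (c * w) ^ (τ - σ) * Real.exp (-(c * w)))))
      (Set.Ioi 0) := by
  intro a ha b hb hab
  simp only [Set.mem_Ioi] at ha hb
  set C := η / (c ^ τ * Real.Gamma (1 - σ)) with hC
  have hCpos : 0 < C := by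
    apply div_pos hη
    exact mul_pos (Real.rpow_pos_of_pos hc τ) (Real.Gamma_pos_of_pos (by linarith))
  set g : ℝ → ℝ := fun x => lowerGamma (τ - σ + 1) x + x ^ (τ - σ) * Real.exp (-x) with hg
  have hs : τ - σ ≤ 0 := by linarith
  have hs' : -1 < τ - σ := by linarith
  have hgpos : ∀ x : ℝ, 0 < x → 0 < g x := by
    intro x hx
    have h1 : 0 < x ^ (τ - σ) * Real.exp (-x) :=
      mul_pos (Real.rpow_pos_of_pos hx _) (Real.exp_pos _)
    have h2 : 0 ≤ lowerGamma (τ - σ + 1) x := lowerGamma_nonneg hx.le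
    simp only [hg]; linarith
  have hganti : g (c * b) ≤ g (c * a) :=
    g_anti hs hs' (mul_pos hc ha) (by nlinarith)
  -- rewrite: w * (C * w^(-1-τ) * g(cw)) = C * (w^(-τ) * g(cw))
  have key : ∀ w : ℝ, 0 < w →
      w * (C * w ^ (-1 - τ) * g (c * w)) = C * (w ^ (-τ) * g (c * w)) := by
    intro w hw
    have h1 : w ^ (1 + (-1 - τ)) = w ^ (1 : ℝ) * w ^ (-1 - τ) := Real.rpow_add hw _ _
    rw [Real.rpow_one, show 1 + (-1 - τ) = -τ by ring] at h1
    have : w * w ^ (-1 - τ) = w ^ (-τ) := h1.symm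
    calc w * (C * w ^ (-1 - τ) * g (c * w))
        = C * ((w * w ^ (-1 - τ)) * g (c * w)) := by ring
      _ = C * (w ^ (-τ) * g (c * w)) := by rw [this]
  show b * (C * b ^ (-1 - τ) * g (c * b)) < a * (C * a ^ (-1 - τ) * g (c * a))
  rw [key a ha, key b hb]
  have hrp : b ^ (-τ) < a ^ (-τ) := by
    rw [Real.rpow_neg ha.le, Real.rpow_neg hb.le]
    exact inv_strictAnti₀ (Real.rpow_pos_of_pos ha τ) (Real.rpow_lt_rpow ha.le hab hτ)
  have h1 : b ^ (-τ) * g (c * b) ≤ b ^ (-τ) * g (c * a) :=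
    mul_le_mul_of_nonneg_left hganti (Real.rpow_pos_of_pos hb _).le
  have h2 : b ^ (-τ) * g (c * a) < a ^ (-τ) * g (c * a) :=
    mul_lt_mul_of_pos_right hrp (hgpos _ (mul_pos hc ha))
  exact mul_lt_mul_of_pos_left (lt_of_le_of_lt h1 h2) hCpos
end

section
/- Let η > 0, c > 0, 0 < σ < 1, τ > σ, and ρ(w) = (η(τ−σ)/(c^τ Γ(1−σ))) w^{−1−τ} γ(τ−σ, c w) with tail intensity ρ̄(x) = ∫ₓ^∞ ρ(w) dw. Then ρ̄(x) ~ (η/(c^σ σ Γ(1−σ))) x^{−σ} as x → 0⁺. -/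
open Real MeasureTheory Filter

-- auxiliary lemmas

lemma lg_intble {s : ℝ} (hs : 0 < s) (a b : ℝ) :
    IntervalIntegrable (fun t => t ^ (s - 1) * Real.exp (-t)) volume a b :=
  (intervalIntegral.intervalIntegrable_rpow' (by linarith)).mul_continuousOn
    (Continuous.continuousOn (by continuity))

lemma lg_continuous {s : ℝ} (hs : 0 < s) : Continuous (lowerGamma s) :=
  intervalIntegral.continuous_primitive (lg_intble hs) 0

lemma lg_nonneg {s : ℝ} (hs : 0 < s) {y : ℝ} (hy : 0 ≤ y) : 0 ≤ lowerGamma s y := by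
  apply intervalIntegral.integral_nonneg hy
  intro t ht
  have : 0 ≤ t ^ (s-1) := Real.rpow_nonneg ht.1 _
  positivity

lemma lg_upper {s : ℝ} (hs : 0 < s) {y : ℝ} (hy : 0 ≤ y) :
    lowerGamma s y ≤ y ^ s / s := by
  have h1 : lowerGamma s y ≤ ∫ t in (0:ℝ)..y, t ^ (s - 1) := by
    apply intervalIntegral.integral_mono_on hy (lg_intble hs 0 y)
      (intervalIntegral.intervalIntegrable_rpow' (by linarith))
    intro t ht
    have h0 : 0 ≤ t ^ (s-1) := Real.rpow_nonneg ht.1 _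
    nlinarith [Real.exp_le_one_iff.2 (neg_nonpos.2 ht.1), Real.exp_pos (-t)]
  calc lowerGamma s y ≤ _ := h1
    _ = y ^ s / s := by
        rw [integral_rpow (Or.inl (by linarith))]
        rw [Real.zero_rpow (by linarith)]
        ring_nf

lemma lg_lower {s : ℝ} (hs : 0 < s) {y : ℝ} (hy : 0 ≤ y) :
    Real.exp (-y) * (y ^ s / s) ≤ lowerGamma s y := by
  have h1 : (∫ t in (0:ℝ)..y, t ^ (s - 1) * Real.exp (-y)) ≤ lowerGamma s y := by
    apply intervalIntegral.integral_mono_on hy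
      ((intervalIntegral.intervalIntegrable_rpow' (r := s - 1) (by linarith)).mul_const _)
      (lg_intble hs 0 y)
    intro t ht
    have h0 : 0 ≤ t ^ (s-1) := Real.rpow_nonneg ht.1 _
    have := Real.exp_le_exp.2 (neg_le_neg ht.2)
    nlinarith
  calc Real.exp (-y) * (y ^ s / s)
      = ∫ t in (0:ℝ)..y, t ^ (s - 1) * Real.exp (-y) := by
        rw [intervalIntegral.integral_mul_const, integral_rpow (Or.inl (by linarith)),
          Real.zero_rpow (by linarith)]
        ring_nf
    _ ≤ lowerGamma s y := h1

lemma lg_lim {s : ℝ} (hs : 0 < s) :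
    Tendsto (fun y => y ^ (-s) * lowerGamma s y) (nhdsWithin 0 (Set.Ioi 0)) (nhds (1/s)) := by
  apply tendsto_of_tendsto_of_tendsto_of_le_of_le'
    (g := fun y => Real.exp (-y) * (1/s)) (h := fun _ => 1/s)
  · have : Tendsto (fun y : ℝ => Real.exp (-y) * (1/s)) (nhds 0)
        (nhds (Real.exp (-0) * (1/s))) :=
      Continuous.tendsto (by continuity) 0
    simpa using this.mono_left nhdsWithin_le_nhds
  · exact tendsto_const_nhds
  · filter_upwards [self_mem_nhdsWithin] with y (hy : 0 < y)
    have h := lg_lower hs hy.le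
    have hyp : (0:ℝ) < y ^ (-s) := Real.rpow_pos_of_pos hy _
    have hys : y ^ (-s) * y ^ s = 1 := by
      rw [← Real.rpow_add hy]; simp
    calc Real.exp (-y) * (1/s) = y ^ (-s) * (Real.exp (-y) * (y ^ s / s)) := by
          rw [show y ^ (-s) * (Real.exp (-y) * (y ^ s / s))
              = Real.exp (-y) * (y ^ (-s) * y ^ s / s) from by ring, hys]
      _ ≤ y ^ (-s) * lowerGamma s y := mul_le_mul_of_nonneg_left h hyp.le
  · filter_upwards [self_mem_nhdsWithin] with y (hy : 0 < y)
    have h := lg_upper hs hy.le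
    have hyp : (0:ℝ) < y ^ (-s) := Real.rpow_pos_of_pos hy _
    have hys : y ^ (-s) * y ^ s = 1 := by
      rw [← Real.rpow_add hy]; simp
    calc y ^ (-s) * lowerGamma s y ≤ y ^ (-s) * (y ^ s / s) := by nlinarith
      _ = 1/s := by rw [mul_div_assoc', hys]


lemma key {c σ a : ℝ} (hc : 0 < c) (hσ0 : 0 < σ) (ha : 0 < a) :
    Tendsto (fun x : ℝ => ∫ u in Set.Ioi (1:ℝ),
        x ^ (-a) * (u ^ (-1 - (σ + a)) * lowerGamma a (c * (x * u))))
      (nhdsWithin 0 (Set.Ioi 0)) (nhds (c ^ a / (a * σ))) := by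
  have hca : (0:ℝ) < c ^ a := Real.rpow_pos_of_pos hc a
  have hval : (∫ u in Set.Ioi (1:ℝ), c ^ a / a * u ^ (-1 - σ)) = c ^ a / (a * σ) := by
    rw [MeasureTheory.integral_const_mul, integral_Ioi_rpow_of_lt (by linarith) one_pos]
    rw [Real.one_rpow]
    rw [show -1 - σ + 1 = -σ from by ring, neg_div_neg_eq, div_mul_div_comm, mul_one]
  rw [← hval]
  apply MeasureTheory.tendsto_integral_filter_of_dominated_convergence
    (bound := fun u => c ^ a / a * u ^ (-1 - σ))
  · filter_upwards with x
    apply ContinuousOn.aestronglyMeasurable _ measurableSet_Ioi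
    apply ContinuousOn.mul continuousOn_const
    apply ContinuousOn.mul
    · intro u hu
      exact (Real.continuousAt_rpow_const u _
        (Or.inl (by simp at hu; linarith))).continuousWithinAt
    · exact ((lg_continuous ha).comp (by continuity)).continuousOn
  · filter_upwards [self_mem_nhdsWithin] with x (hx : 0 < x)
    rw [MeasureTheory.ae_restrict_iff' measurableSet_Ioi]
    filter_upwards with u hu
    have hu1 : (1:ℝ) < u := hu
    have hu0 : (0:ℝ) < u := by linarith
    have hy : 0 < c * (x * u) := by positivity
    have hxp : (0:ℝ) < x ^ (-a) := Real.rpow_pos_of_pos hx _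
    have hup : (0:ℝ) < u ^ (-1 - (σ + a)) := Real.rpow_pos_of_pos hu0 _
    have hg0 := lg_nonneg ha hy.le
    have hgu := lg_upper ha hy.le
    rw [Real.norm_of_nonneg (by positivity)]
    have hrw : x ^ (-a) * (u ^ (-1 - (σ + a)) * ((c * (x * u)) ^ a / a))
        = c ^ a / a * u ^ (-1 - σ) := by
      rw [Real.mul_rpow hc.le (by positivity), Real.mul_rpow hx.le hu0.le]
      rw [show x ^ (-a) * (u ^ (-1 - (σ + a)) * (c ^ a * (x ^ a * u ^ a) / a))
          = (x ^ (-a) * x ^ a) * ((u ^ (-1 - (σ + a)) * u ^ a) * (c ^ a / a)) from by ring]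
      rw [← Real.rpow_add hx, ← Real.rpow_add hu0]
      rw [show -a + a = 0 from by ring, Real.rpow_zero,
        show -1 - (σ + a) + a = -1 - σ from by ring]
      ring
    calc x ^ (-a) * (u ^ (-1 - (σ + a)) * lowerGamma a (c * (x * u)))
        ≤ x ^ (-a) * (u ^ (-1 - (σ + a)) * ((c * (x * u)) ^ a / a)) := by
          apply mul_le_mul_of_nonneg_left _ hxp.le
          exact mul_le_mul_of_nonneg_left hgu hup.le
      _ = c ^ a / a * u ^ (-1 - σ) := hrw
  · exact (integrableOn_Ioi_rpow_of_lt (by linarith) one_pos).const_mul _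
  · rw [MeasureTheory.ae_restrict_iff' measurableSet_Ioi]
    filter_upwards with u hu'
    have hu1 : (1:ℝ) < u := hu'
    have hu0 : (0:ℝ) < u := by linarith
    have hcu : 0 < c * u := by positivity
    have hmap : Tendsto (fun x : ℝ => c * (x * u)) (nhdsWithin 0 (Set.Ioi 0))
        (nhdsWithin 0 (Set.Ioi 0)) := by
      rw [tendsto_nhdsWithin_iff]
      constructor
      · have : Tendsto (fun x : ℝ => c * (x * u)) (nhds 0) (nhds (c * (0 * u))) :=
          Continuous.tendsto (by continuity) 0
        simpa using this.mono_left nhdsWithin_le_nhds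
      · filter_upwards [self_mem_nhdsWithin] with x (hx : 0 < x)
        exact Set.mem_Ioi.2 (by positivity)
    have h1 := ((lg_lim ha).comp hmap).const_mul (u ^ (-1 - (σ + a)) * (c * u) ^ a)
    have hlimeq : u ^ (-1 - (σ + a)) * (c * u) ^ a * (1 / a) = c ^ a / a * u ^ (-1 - σ) := by
      rw [Real.mul_rpow hc.le hu0.le,
        show u ^ (-1 - (σ + a)) * (c ^ a * u ^ a) * (1 / a)
          = (u ^ (-1 - (σ + a)) * u ^ a) * (c ^ a * (1 / a)) from by ring,
        ← Real.rpow_add hu0, show -1 - (σ + a) + a = -1 - σ from by ring]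
      ring
    rw [← hlimeq]
    apply Tendsto.congr' _ h1
    filter_upwards [self_mem_nhdsWithin] with x (hx : 0 < x)
    have hcom : c * (x * u) = (c * u) * x := by ring
    have h2 : (c * u) ^ a * (c * u) ^ (-a) = 1 := by
      rw [← Real.rpow_add hcu]; simp
    simp only [Function.comp_apply]
    rw [hcom, Real.mul_rpow hcu.le hx.le]
    rw [show u ^ (-1 - (σ + a)) * (c * u) ^ a * ((c * u) ^ (-a) * x ^ (-a) * lowerGamma a (c * u * x))
        = ((c * u) ^ a * (c * u) ^ (-a)) * (x ^ (-a) * (u ^ (-1 - (σ + a)) * lowerGamma a (c * u * x)))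
        from by ring, h2, one_mul]


theorem ggp_tail_at_zero (η c σ τ : ℝ) (hη : 0 < η) (hc : 0 < c)
    (hσ0 : 0 < σ) (hσ : σ < 1) (hτσ : σ < τ) :
    Tendsto (fun x : ℝ =>
        (∫ w in Set.Ioi x,
            (η * (τ - σ) / (c ^ τ * Real.Gamma (1 - σ))) * w ^ (-1 - τ) *
              lowerGamma (τ - σ) (c * w)) /
          ((η / (c ^ σ * σ * Real.Gamma (1 - σ))) * x ^ (-σ)))
      (nhdsWithin 0 (Set.Ioi 0)) (nhds 1) := by
  have ha : 0 < τ - σ := by linarith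
  have hΓ : 0 < Real.Gamma (1 - σ) := Real.Gamma_pos_of_pos (by linarith)
  set K := η * (τ - σ) / (c ^ τ * Real.Gamma (1 - σ)) with hKdef
  set D := η / (c ^ σ * σ * Real.Gamma (1 - σ)) with hDdef
  have hcτ : (0:ℝ) < c ^ τ := Real.rpow_pos_of_pos hc _
  have hcσ : (0:ℝ) < c ^ σ := Real.rpow_pos_of_pos hc _
  have hca : (0:ℝ) < c ^ (τ - σ) := Real.rpow_pos_of_pos hc _
  have hK : 0 < K := by rw [hKdef]; positivity
  have hD : 0 < D := by rw [hDdef]; positivity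
  have hk := key (c := c) (σ := σ) (a := τ - σ) hc hσ0 ha
  simp only [show σ + (τ - σ) = τ from by ring] at hk
  have hone : K / D * (c ^ (τ - σ) / ((τ - σ) * σ)) = 1 := by
    have hsum : c ^ τ = c ^ σ * c ^ (τ - σ) := by
      rw [← Real.rpow_add hc]; ring_nf
    rw [hKdef, hDdef, hsum]
    field_simp
  have h2 := hk.const_mul (K / D)
  rw [hone] at h2
  apply h2.congr'
  filter_upwards [self_mem_nhdsWithin] with x (hx : 0 < x)
  have hxσ : (0:ℝ) < x ^ (-σ) := Real.rpow_pos_of_pos hx _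
  have hcomp := MeasureTheory.integral_comp_mul_left_Ioi
    (fun w => w ^ (-1 - τ) * lowerGamma (τ - σ) (c * w)) 1 hx
  simp only [mul_one, smul_eq_mul] at hcomp
  -- hcomp : ∫ u in Ioi 1, (x*u)^(-1-τ) * lowerGamma (τ-σ) (c*(x*u)) = x⁻¹ * ∫ w in Ioi x, ...
  have hC : (∫ u in Set.Ioi (1:ℝ),
        x ^ (-(τ - σ)) * (u ^ (-1 - τ) * lowerGamma (τ - σ) (c * (x * u))))
      = x ^ (1 + σ) * ∫ u in Set.Ioi (1:ℝ),
        (x * u) ^ (-1 - τ) * lowerGamma (τ - σ) (c * (x * u)) := by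
    rw [← MeasureTheory.integral_const_mul]
    apply MeasureTheory.setIntegral_congr_fun measurableSet_Ioi
    intro u hu
    have hu0 : (0:ℝ) < u := lt_trans one_pos hu
    dsimp only
    rw [Real.mul_rpow hx.le hu0.le,
      show x ^ (1 + σ) * (x ^ (-1 - τ) * u ^ (-1 - τ) * lowerGamma (τ - σ) (c * (x * u)))
        = (x ^ (1 + σ) * x ^ (-1 - τ)) * (u ^ (-1 - τ) * lowerGamma (τ - σ) (c * (x * u)))
        from by ring,
      ← Real.rpow_add hx, show 1 + σ + (-1 - τ) = -(τ - σ) from by ring]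
  have hnum : (∫ w in Set.Ioi x, K * w ^ (-1 - τ) * lowerGamma (τ - σ) (c * w))
      = K * ∫ w in Set.Ioi x, w ^ (-1 - τ) * lowerGamma (τ - σ) (c * w) := by
    simp_rw [mul_assoc]
    rw [MeasureTheory.integral_const_mul]
  have hxx : x ^ (1 + σ) * x ^ (-σ) = x := by
    rw [← Real.rpow_add hx]; norm_num
  show K / D * _ = _
  rw [hC, hnum, hcomp, eq_div_iff (by positivity)]
  calc K / D * (x ^ (1 + σ) * (x⁻¹ * ∫ w in Set.Ioi x,
          w ^ (-1 - τ) * lowerGamma (τ - σ) (c * w))) * (D * x ^ (-σ))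
      = (K * (D / D)) * ((x ^ (1 + σ) * x ^ (-σ)) * (x⁻¹ * ∫ w in Set.Ioi x,
          w ^ (-1 - τ) * lowerGamma (τ - σ) (c * w))) := by ring
    _ = K * (∫ w in Set.Ioi x, w ^ (-1 - τ) * lowerGamma (τ - σ) (c * w)) := by
        rw [div_self hD.ne', hxx]
        field_simp
end

section
/- Let η > 0, c > 0, σ < 0, τ > 0, and ρ(w) = (η(τ−σ)/(c^τ Γ(1−σ))) w^{−1−τ} γ(τ−σ, c w) with tail intensity ρ̄(x) = ∫ₓ^∞ ρ(w) dw. Then ρ̄(x) → η(τ−σ)/(−στ) as x → 0⁺. -/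
open Real MeasureTheory Filter

namespace GGPAux

lemma intInt {s : ℝ} (hs : 0 < s) (a b : ℝ) :
    IntervalIntegrable (fun t : ℝ => t ^ (s - 1) * Real.exp (-t)) volume a b :=
  (intervalIntegral.intervalIntegrable_rpow' (by linarith)).mul_continuousOn
    ((Real.continuous_exp.comp continuous_neg).continuousOn)

lemma lg_continuous {s : ℝ} (hs : 0 < s) : Continuous (lowerGamma s) := by
  unfold lowerGamma
  exact intervalIntegral.continuous_primitive (intInt hs) 0

lemma lg_eq {s : ℝ} (a : ℝ) (ha : 0 ≤ a) :
    lowerGamma s a = ∫ t in Set.Ioc (0:ℝ) a, t ^ (s - 1) * Real.exp (-t) := by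
  rw [lowerGamma, intervalIntegral.integral_of_le ha]

lemma G_nonneg {s t : ℝ} (ht : 0 ≤ t) : 0 ≤ t ^ (s - 1) * Real.exp (-t) :=
  mul_nonneg (Real.rpow_nonneg ht _) (Real.exp_pos _).le

lemma lg_nonneg {s a : ℝ} (ha : 0 ≤ a) : 0 ≤ lowerGamma s a := by
  rw [lg_eq a ha]
  exact setIntegral_nonneg measurableSet_Ioc fun t ht => G_nonneg ht.1.le

noncomputable def phi (c τ s : ℝ) (p : ℝ × ℝ) : ENNReal :=
  {q : ℝ × ℝ | q.2 ≤ c * q.1}.indicator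
    (fun q => ENNReal.ofReal (q.1 ^ (-1 - τ)) *
      ENNReal.ofReal (q.2 ^ (s - 1) * Real.exp (-q.2))) p

lemma key {c σ τ : ℝ} (hc : 0 < c) (hσ : σ < 0) (hτ : 0 < τ) :
    IntegrableOn (fun w => w ^ (-1 - τ) * lowerGamma (τ - σ) (c * w)) (Set.Ioi (0:ℝ)) ∧
    ∫ w in Set.Ioi (0:ℝ), w ^ (-1 - τ) * lowerGamma (τ - σ) (c * w)
      = c ^ τ * Real.Gamma (-σ) / τ := by
  have hs : (0:ℝ) < τ - σ := by linarith
  have hσ' : (0:ℝ) < -σ := by linarith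
  set s : ℝ := τ - σ with hs_def
  set F : ℝ → ℝ := fun w => w ^ (-1 - τ) * lowerGamma s (c * w) with hF
  have hFmeas : AEStronglyMeasurable F (volume.restrict (Set.Ioi 0)) := by
    apply ContinuousOn.aestronglyMeasurable _ measurableSet_Ioi
    exact (continuousOn_id.rpow_const fun x hx => Or.inl (ne_of_gt hx)).mul
      (((lg_continuous hs).comp (continuous_const.mul continuous_id)).continuousOn)
  have hFnonneg : ∀ w ∈ Set.Ioi (0:ℝ), 0 ≤ F w := fun w hw =>
    mul_nonneg (Real.rpow_nonneg (le_of_lt hw) _)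
      (lg_nonneg (mul_nonneg hc.le (le_of_lt hw)))
  have hnnae : 0 ≤ᵐ[volume.restrict (Set.Ioi (0:ℝ))] F :=
    (ae_restrict_iff' measurableSet_Ioi).mpr (ae_of_all _ hFnonneg)
  have hΦmeas : Measurable (phi c τ s) := by
    apply Measurable.indicator
    · exact ((measurable_fst.pow_const _).ennreal_ofReal).mul
        (((measurable_snd.pow_const _).mul
          (Real.measurable_exp.comp measurable_snd.neg)).ennreal_ofReal)
    · exact measurableSet_le measurable_snd (measurable_const.mul measurable_fst)
  -- step 1 : rewrite ofReal (F w) as an inner lintegral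
  have hstep1 : ∀ w ∈ Set.Ioi (0:ℝ),
      ENNReal.ofReal (F w) = ∫⁻ t in Set.Ioi (0:ℝ), phi c τ s (w, t) := by
    intro w hw
    have hw0 : (0:ℝ) < w := hw
    have hcw : (0:ℝ) ≤ c * w := mul_nonneg hc.le hw0.le
    have hGint : IntegrableOn (fun t : ℝ => t ^ (s - 1) * Real.exp (-t))
        (Set.Ioc 0 (c * w)) := by
      rw [← intervalIntegrable_iff_integrableOn_Ioc_of_le hcw]
      exact intInt hs 0 (c * w)
    have hGnn : 0 ≤ᵐ[volume.restrict (Set.Ioc (0:ℝ) (c * w))]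
        fun t : ℝ => t ^ (s - 1) * Real.exp (-t) :=
      (ae_restrict_iff' measurableSet_Ioc).mpr (ae_of_all _ fun t ht => G_nonneg ht.1.le)
    have h1 : ENNReal.ofReal (lowerGamma s (c * w))
        = ∫⁻ t in Set.Ioc (0:ℝ) (c * w), ENNReal.ofReal (t ^ (s - 1) * Real.exp (-t)) := by
      rw [lg_eq _ hcw]
      exact ofReal_integral_eq_lintegral_ofReal hGint hGnn
    have hrw : (fun t : ℝ => phi c τ s (w, t)) = (Set.Iic (c * w)).indicator
        (fun t => ENNReal.ofReal (w ^ (-1 - τ)) *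
          ENNReal.ofReal (t ^ (s - 1) * Real.exp (-t))) := by
      funext t
      by_cases h : t ≤ c * w <;>
        simp [phi, Set.indicator_apply, h]
    calc ENNReal.ofReal (F w)
        = ENNReal.ofReal (w ^ (-1 - τ)) * ENNReal.ofReal (lowerGamma s (c * w)) :=
          ENNReal.ofReal_mul (Real.rpow_nonneg hw0.le _)
      _ = ∫⁻ t in Set.Ioc (0:ℝ) (c * w),
            ENNReal.ofReal (w ^ (-1 - τ)) * ENNReal.ofReal (t ^ (s - 1) * Real.exp (-t)) := by
          rw [h1, ← lintegral_const_mul' _ _ ENNReal.ofReal_ne_top]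
      _ = ∫⁻ t in Set.Ioi (0:ℝ), phi c τ s (w, t) := by
          rw [hrw, lintegral_indicator measurableSet_Iic,
            Measure.restrict_restrict measurableSet_Iic, Set.inter_comm, Set.Ioi_inter_Iic]
  -- inner integral after swapping
  have hinner : ∀ t ∈ Set.Ioi (0:ℝ),
      ∫⁻ w in Set.Ioi (0:ℝ), phi c τ s (w, t)
        = ENNReal.ofReal ((t ^ (s - 1) * Real.exp (-t)) * ((t / c) ^ (-τ) / τ)) := by
    intro t ht
    have ht0 : (0:ℝ) < t := ht
    have htc : (0:ℝ) < t / c := div_pos ht0 hc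
    have hiff : ∀ w : ℝ, (t ≤ c * w) ↔ (t / c ≤ w) := by
      intro w; rw [div_le_iff₀ hc, mul_comm]
    have hrw : (fun w : ℝ => phi c τ s (w, t)) = (Set.Ici (t / c)).indicator
        (fun w => ENNReal.ofReal (w ^ (-1 - τ)) *
          ENNReal.ofReal (t ^ (s - 1) * Real.exp (-t))) := by
      funext w
      by_cases h : t / c ≤ w <;>
        simp [phi, Set.indicator_apply, Set.mem_Ici, hiff w, h]
    have hint : IntegrableOn (fun w : ℝ => w ^ (-1 - τ)) (Set.Ioi (t / c)) :=
      integrableOn_Ioi_rpow_of_lt (by linarith) htc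
    have hnn : 0 ≤ᵐ[volume.restrict (Set.Ioi (t / c))] fun w : ℝ => w ^ (-1 - τ) :=
      (ae_restrict_iff' measurableSet_Ioi).mpr (ae_of_all _ fun w hw =>
        Real.rpow_nonneg (le_of_lt (lt_trans htc hw)) _)
    have hval : ∫ w in Set.Ioi (t / c), w ^ (-1 - τ) = (t / c) ^ (-τ) / τ := by
      rw [integral_Ioi_rpow_of_lt (by linarith) htc,
        show (-1 - τ + 1 : ℝ) = -τ by ring, neg_div_neg_eq]
    calc ∫⁻ w in Set.Ioi (0:ℝ), phi c τ s (w, t)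
        = ∫⁻ w in Set.Ici (t / c) ∩ Set.Ioi (0:ℝ),
            ENNReal.ofReal (w ^ (-1 - τ)) * ENNReal.ofReal (t ^ (s - 1) * Real.exp (-t)) := by
          rw [hrw, lintegral_indicator measurableSet_Ici,
            Measure.restrict_restrict measurableSet_Ici]
      _ = ∫⁻ w in Set.Ioi (t / c),
            ENNReal.ofReal (w ^ (-1 - τ)) * ENNReal.ofReal (t ^ (s - 1) * Real.exp (-t)) := by
          have hss : Set.Ici (t / c) ∩ Set.Ioi (0:ℝ) = Set.Ici (t / c) :=
            Set.inter_eq_left.mpr fun w hw => lt_of_lt_of_le htc hw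
          rw [hss, ← Measure.restrict_congr_set Ioi_ae_eq_Ici]
      _ = (∫⁻ w in Set.Ioi (t / c), ENNReal.ofReal (w ^ (-1 - τ))) *
            ENNReal.ofReal (t ^ (s - 1) * Real.exp (-t)) :=
          lintegral_mul_const' _ _ ENNReal.ofReal_ne_top
      _ = ENNReal.ofReal ((t ^ (s - 1) * Real.exp (-t)) * ((t / c) ^ (-τ) / τ)) := by
          rw [← ofReal_integral_eq_lintegral_ofReal hint hnn, hval,
            ← ENNReal.ofReal_mul (by positivity : (0:ℝ) ≤ (t / c) ^ (-τ) / τ), mul_comm]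
  -- pointwise simplification of the outer integrand
  have houter : ∀ t ∈ Set.Ioi (0:ℝ),
      (t ^ (s - 1) * Real.exp (-t)) * ((t / c) ^ (-τ) / τ)
        = (c ^ τ / τ) * (Real.exp (-t) * t ^ (-σ - 1)) := by
    intro t ht
    have ht0 : (0:ℝ) < t := ht
    have h1 : (t / c) ^ (-τ) = t ^ (-τ) * c ^ τ := by
      rw [Real.div_rpow ht0.le hc.le, Real.rpow_neg hc.le]; field_simp
    have h2 : t ^ (s - 1) * t ^ (-τ) = t ^ (-σ - 1) := by
      rw [← Real.rpow_add ht0]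
      congr 1
      rw [hs_def]; ring
    calc (t ^ (s - 1) * Real.exp (-t)) * ((t / c) ^ (-τ) / τ)
        = (c ^ τ / τ) * (Real.exp (-t) * (t ^ (s - 1) * t ^ (-τ))) := by rw [h1]; ring
      _ = (c ^ τ / τ) * (Real.exp (-t) * t ^ (-σ - 1)) := by rw [h2]
  -- assembling: the lintegral of F
  have hInt2 : IntegrableOn (fun t : ℝ => (c ^ τ / τ) * (Real.exp (-t) * t ^ (-σ - 1)))
      (Set.Ioi (0:ℝ)) := by
    have := (Real.GammaIntegral_convergent hσ').const_mul (c ^ τ / τ)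
    exact this
  have hnn2 : 0 ≤ᵐ[volume.restrict (Set.Ioi (0:ℝ))]
      fun t : ℝ => (c ^ τ / τ) * (Real.exp (-t) * t ^ (-σ - 1)) :=
    (ae_restrict_iff' measurableSet_Ioi).mpr (ae_of_all _ fun t ht => by
      have ht0 : (0:ℝ) < t := ht
      positivity)
  have hL : ∫⁻ w in Set.Ioi (0:ℝ), ENNReal.ofReal (F w)
      = ENNReal.ofReal (c ^ τ * Real.Gamma (-σ) / τ) := by
    have hswap := lintegral_lintegral_swap (μ := volume.restrict (Set.Ioi (0:ℝ)))
      (ν := volume.restrict (Set.Ioi (0:ℝ))) (f := fun w t => phi c τ s (w, t))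
      ((hΦmeas.comp (measurable_fst.prodMk measurable_snd)).aemeasurable)
    rw [setLIntegral_congr_fun measurableSet_Ioi hstep1, hswap,
      setLIntegral_congr_fun measurableSet_Ioi hinner,
      setLIntegral_congr_fun measurableSet_Ioi
        (fun t ht => by rw [houter t ht]),
      ← ofReal_integral_eq_lintegral_ofReal hInt2 hnn2, integral_const_mul,
      ← Real.Gamma_eq_integral hσ']
    congr 1
    ring
  have hIntF : IntegrableOn F (Set.Ioi (0:ℝ)) := by
    refine ⟨hFmeas, ?_⟩
    rw [hasFiniteIntegral_iff_ofReal hnnae, hL]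
    exact ENNReal.ofReal_lt_top
  refine ⟨hIntF, ?_⟩
  have hVnn : (0:ℝ) ≤ c ^ τ * Real.Gamma (-σ) / τ :=
    div_nonneg (mul_nonneg (Real.rpow_pos_of_pos hc τ).le
      (Real.Gamma_pos_of_pos hσ').le) hτ.le
  rw [integral_eq_lintegral_of_nonneg_ae hnnae hFmeas, hL, ENNReal.toReal_ofReal hVnn]

end GGPAux

theorem ggp_tail_at_zero_finite_activity (η c σ τ : ℝ) (hη : 0 < η) (hc : 0 < c)
    (hσ : σ < 0) (hτ : 0 < τ) :
    Tendsto (fun x : ℝ =>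
        ∫ w in Set.Ioi x,
          (η * (τ - σ) / (c ^ τ * Real.Gamma (1 - σ))) * w ^ (-1 - τ) *
            lowerGamma (τ - σ) (c * w))
      (nhdsWithin 0 (Set.Ioi 0)) (nhds (η * (τ - σ) / (-σ * τ))) := by
  obtain ⟨hIntF, hValF⟩ := GGPAux.key hc hσ hτ
  set K : ℝ := η * (τ - σ) / (c ^ τ * Real.Gamma (1 - σ)) with hK
  set f : ℝ → ℝ := fun w => K * (w ^ (-1 - τ) * lowerGamma (τ - σ) (c * w)) with hf
  have hint : IntegrableOn f (Set.Ioi (0:ℝ)) := hIntF.const_mul K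
  have hval : ∫ w in Set.Ioi (0:ℝ), f w = η * (τ - σ) / (-σ * τ) := by
    rw [hf]
    rw [integral_const_mul, hValF, hK]
    have hΓ : Real.Gamma (1 - σ) = -σ * Real.Gamma (-σ) := by
      rw [show (1:ℝ) - σ = -σ + 1 by ring,
        Real.Gamma_add_one (by linarith : (-σ:ℝ) ≠ 0)]
    have h1 : Real.Gamma (-σ) ≠ 0 := (Real.Gamma_pos_of_pos (by linarith)).ne'
    have h2 : (c:ℝ) ^ τ ≠ 0 := (Real.rpow_pos_of_pos hc τ).ne'
    have h3 : (-σ:ℝ) ≠ 0 := by linarith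
    have h4 : (τ:ℝ) ≠ 0 := hτ.ne'
    rw [hΓ]
    have hΓpos : 0 < Real.Gamma (-σ) := Real.Gamma_pos_of_pos (by linarith)
    have hcpos : (0:ℝ) < c ^ τ := Real.rpow_pos_of_pos hc τ
    have hd1 : c ^ τ * (-σ * Real.Gamma (-σ)) * τ ≠ 0 :=
      (mul_pos (mul_pos hcpos (mul_pos (by linarith) hΓpos)) hτ).ne'
    have hd2 : -σ * τ ≠ 0 := (mul_pos (by linarith : (0:ℝ) < -σ) hτ).ne'
    rw [div_mul_div_comm, div_eq_div_iff hd1 hd2]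
    ring
  have hsplit : ∀ x ∈ Set.Ioi (0:ℝ),
      ∫ w in Set.Ioi x, f w = (∫ w in Set.Ioi (0:ℝ), f w) - ∫ w in Set.Ioc 0 x, f w := by
    intro x hx
    have h1 : Set.Ioc 0 x ∪ Set.Ioi x = Set.Ioi (0:ℝ) :=
      Set.Ioc_union_Ioi_eq_Ioi (le_of_lt hx)
    have h2 := setIntegral_union (Set.Ioc_disjoint_Ioi le_rfl) measurableSet_Ioi
      (hint.mono_set (h1 ▸ Set.subset_union_left))
      (hint.mono_set (h1 ▸ Set.subset_union_right)) (f := f) (μ := volume)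
    rw [← h1, h2]
    ring
  have hzero : Tendsto (fun x : ℝ => ∫ w in Set.Ioc (0:ℝ) x, f w)
      (nhdsWithin 0 (Set.Ioi 0)) (nhds 0) := by
    have hμ : Tendsto ((volume.restrict (Set.Ioi (0:ℝ))) ∘ fun x : ℝ => Set.Ioc 0 x)
        (nhdsWithin 0 (Set.Ioi 0)) (nhds 0) := by
      have heq : ((volume.restrict (Set.Ioi (0:ℝ))) ∘ fun x : ℝ => Set.Ioc 0 x)
          = fun x : ℝ => ENNReal.ofReal x := by
        funext x
        simp only [Function.comp_apply,
          Measure.restrict_apply measurableSet_Ioc,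
          Set.inter_eq_left.mpr Set.Ioc_subset_Ioi_self]
        rw [Real.volume_Ioc, sub_zero]
      rw [heq]
      have : Tendsto (fun x : ℝ => x) (nhdsWithin 0 (Set.Ioi 0)) (nhds 0) :=
        tendsto_id.mono_left nhdsWithin_le_nhds
      have h' := (ENNReal.continuous_ofReal.tendsto 0).comp this
      rw [ENNReal.ofReal_zero] at h'
      exact h'
    have h := hint.tendsto_setIntegral_nhds_zero hμ
    have heq2 : ∀ x : ℝ,
        (∫ w in Set.Ioc (0:ℝ) x, f w ∂(volume.restrict (Set.Ioi 0)))
          = ∫ w in Set.Ioc (0:ℝ) x, f w := by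
      intro x
      rw [Measure.restrict_restrict measurableSet_Ioc,
        Set.inter_eq_left.mpr Set.Ioc_subset_Ioi_self]
    simpa only [heq2] using h
  have hmain : Tendsto
      (fun x : ℝ => (∫ w in Set.Ioi (0:ℝ), f w) - ∫ w in Set.Ioc (0:ℝ) x, f w)
      (nhdsWithin 0 (Set.Ioi 0)) (nhds ((∫ w in Set.Ioi (0:ℝ), f w) - 0)) :=
    tendsto_const_nhds.sub hzero
  rw [sub_zero] at hmain
  rw [← hval]
  refine hmain.congr' ?_
  filter_upwards [self_mem_nhdsWithin] with x hx
  rw [← hsplit x hx]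
  exact setIntegral_congr_fun measurableSet_Ioi fun w _ => (mul_assoc _ _ _).symm
end

section
/- Let η > 0, c > 0, σ < 1, τ > 0, and ρ(w) = (η/(c^τ Γ(1−σ))) w^{−1−τ} [γ(τ−σ+1, c w) + (c w)^{τ−σ} e^{−c w}]. Then −ρ(w) − w ρ'(w) = (η σ/(c^σ Γ(1−σ))) w^{−1−σ} e^{−c w} + (η τ/(c^τ Γ(1−σ))) w^{−1−τ} γ(τ−σ+1, c w) for all w > 0. -/
open Real MeasureTheory

/-- The GGP Lévy intensity. -/
noncomputable def rhoGGP (η c σ τ w : ℝ) : ℝ :=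
  (η / (c ^ τ * Real.Gamma (1 - σ))) * w ^ (-1 - τ) *
    (lowerGamma (τ - σ + 1) (c * w) + (c * w) ^ (τ - σ) * Real.exp (-(c * w)))

open Set in
lemma lowerGamma_hasDerivAt {s x : ℝ} (hs : 0 < s) (hx : 0 < x) :
    HasDerivAt (lowerGamma s) (x ^ (s - 1) * Real.exp (-x)) x := by
  have hcont : ∀ y ∈ Ioi (0:ℝ), ContinuousAt (fun t : ℝ => t ^ (s - 1) * Real.exp (-t)) y := by
    intro y hy
    exact (Real.continuousAt_rpow_const y (s-1) (Or.inl (ne_of_gt hy))).mul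
      ((Real.continuous_exp.comp continuous_neg).continuousAt)
  have hint : IntervalIntegrable (fun t : ℝ => t ^ (s - 1) * Real.exp (-t)) volume 0 x :=
    (intervalIntegral.intervalIntegrable_rpow' (by linarith)).mul_continuousOn
      (Continuous.continuousOn (by continuity))
  have hmeas : StronglyMeasurableAtFilter (fun t : ℝ => t ^ (s - 1) * Real.exp (-t)) (nhds x) :=
    ContinuousAt.stronglyMeasurableAtFilter isOpen_Ioi hcont x hx
  exact intervalIntegral.integral_hasDerivAt_right hint hmeas (hcont x hx)

set_option linter.unusedVariables false in
theorem ggp_background_driving_intensity (η c σ τ : ℝ) (hη : 0 < η) (hc : 0 < c)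
    (hσ : σ < 1) (hτ : 0 < τ) :
    ∀ w : ℝ, 0 < w →
      -rhoGGP η c σ τ w - w * deriv (rhoGGP η c σ τ) w
        = (η * σ / (c ^ σ * Real.Gamma (1 - σ))) * w ^ (-1 - σ) * Real.exp (-(c * w))
            + (η * τ / (c ^ τ * Real.Gamma (1 - σ))) * w ^ (-1 - τ) *
                lowerGamma (τ - σ + 1) (c * w) := by
  intro w hw
  have hcw : 0 < c * w := mul_pos hc hw
  set K : ℝ := η / (c ^ τ * Real.Gamma (1 - σ)) with hK
  have hlin : HasDerivAt (fun u : ℝ => c * u) c w := by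
    simpa using (hasDerivAt_id w).const_mul c
  have hG : HasDerivAt (fun u : ℝ => lowerGamma (τ - σ + 1) (c * u))
      ((c * w) ^ (τ - σ) * Real.exp (-(c * w)) * c) w := by
    have := (lowerGamma_hasDerivAt (s := τ - σ + 1) (by linarith) hcw).comp w hlin
    simpa [Function.comp_def] using this
  have hP : HasDerivAt (fun u : ℝ => (c * u) ^ (τ - σ))
      ((τ - σ) * (c * w) ^ (τ - σ - 1) * c) w := by
    exact (Real.hasDerivAt_rpow_const (Or.inl hcw.ne')).comp w hlin
  have hE : HasDerivAt (fun u : ℝ => Real.exp (-(c * u))) (Real.exp (-(c * w)) * (-c)) w := by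
    have := (Real.hasDerivAt_exp (-(c * w))).comp w hlin.neg
    simpa [mul_comm, Function.comp_def] using this
  have hW : HasDerivAt (fun u : ℝ => u ^ (-1 - τ)) ((-1 - τ) * w ^ (-1 - τ - 1)) w :=
    Real.hasDerivAt_rpow_const (Or.inl hw.ne')
  have hfun : rhoGGP η c σ τ = fun u : ℝ => K *
      (u ^ (-1 - τ) * (lowerGamma (τ - σ + 1) (c * u) + (c * u) ^ (τ - σ) * Real.exp (-(c * u)))) := by
    funext u; simp [rhoGGP, hK, mul_assoc]
  have hρ : HasDerivAt (rhoGGP η c σ τ)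
      (K * ((-1 - τ) * (w ^ (-1 - τ - 1) *
          (lowerGamma (τ - σ + 1) (c * w) + (c * w) ^ (τ - σ) * Real.exp (-(c * w))))
        + w ^ (-1 - τ) * ((τ - σ) * ((c * w) ^ (τ - σ - 1) * (c * Real.exp (-(c * w))))))) w := by
    rw [hfun]
    have := (hW.mul (hG.add (hP.mul hE))).const_mul K
    simpa [mul_assoc] using this
  rw [hρ.deriv]
  simp only [rhoGGP, ← hK]
  -- rewrite powers in basis
  have hΓ : 0 < Real.Gamma (1 - σ) := Real.Gamma_pos_of_pos (by linarith)
  have e1 : w ^ (-1 - τ - 1) = w ^ (-1 - τ) * w⁻¹ := by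
    rw [rpow_sub hw, rpow_one, div_eq_mul_inv]
  have e2 : (c * w) ^ (τ - σ - 1) = (c * w) ^ (τ - σ) * (c * w)⁻¹ := by
    rw [rpow_sub hcw, rpow_one, div_eq_mul_inv]
  have e3 : (c * w) ^ (τ - σ) = c ^ τ * (c ^ σ)⁻¹ * (w ^ (-1 - σ) * (w ^ (-1 - τ))⁻¹) := by
    rw [mul_rpow hc.le hw.le, rpow_sub hc, div_eq_mul_inv,
      show τ - σ = (-1 - σ) + -(-1 - τ) by ring, rpow_add hw, rpow_neg hw.le]
  rw [e1, e2, e3]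
  have hb : w ^ (-1 - τ) ≠ 0 := (rpow_pos_of_pos hw _).ne'
  have hu : c ^ τ ≠ 0 := (rpow_pos_of_pos hc _).ne'
  have hv : c ^ σ ≠ 0 := (rpow_pos_of_pos hc _).ne'
  field_simp [hK]
  rw [hK]
  field_simp
  ring
end

section
/- Let X = Y/Z where Y ~ Gamma(κ, c) (shape κ > 0, rate c > 0) and Z ~ Beta(τ, 1) (τ > 0) are independent. Then X has probability density f(x) = (τ/(c^τ Γ(κ))) x^{−1−τ} γ(κ+τ, c x) for x > 0, i.e., X has the generalised BFRY distribution with parameters (κ, τ, c). -/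
open Real MeasureTheory
open scoped ENNReal

/-- Density of a `Gamma(κ, c)` random variable (shape `κ`, rate `c`). -/
noncomputable def gammaPDF (κ c x : ℝ) : ℝ :=
  if 0 < x then c ^ κ * x ^ (κ - 1) * Real.exp (-(c * x)) / Real.Gamma κ else 0

/-- Density of a `Beta(τ, 1)` random variable. -/
noncomputable def betaPDF (τ z : ℝ) : ℝ :=
  if 0 < z ∧ z < 1 then τ * z ^ (τ - 1) else 0

/-- Density of the generalised BFRY distribution with parameters `(κ, τ, c)`. -/
noncomputable def gbfryPDF (κ τ c x : ℝ) : ℝ :=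
  if 0 < x then (τ / (c ^ τ * Real.Gamma κ)) * x ^ (-1 - τ) * lowerGamma (κ + τ) (c * x)
  else 0

lemma gammaPDF_nonneg {κ c : ℝ} (hκ : 0 < κ) (hc : 0 < c) (x : ℝ) : 0 ≤ gammaPDF κ c x := by
  unfold gammaPDF
  split
  · have := Real.Gamma_pos_of_pos hκ
    positivity
  · exact le_refl 0

lemma betaPDF_nonneg {τ : ℝ} (hτ : 0 < τ) (z : ℝ) : 0 ≤ betaPDF τ z := by
  unfold betaPDF
  split
  · next h => have := h.1; positivity
  · exact le_refl 0

lemma measurable_gammaPDF (κ c : ℝ) : Measurable (gammaPDF κ c) := by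
  unfold gammaPDF
  refine Measurable.ite measurableSet_Ioi ?_ measurable_const
  fun_prop

lemma measurable_betaPDF (τ : ℝ) : Measurable (betaPDF τ) := by
  unfold betaPDF
  refine Measurable.ite ?_ (by fun_prop) measurable_const
  exact MeasurableSet.inter measurableSet_Ioi measurableSet_Iio

lemma integrableOn_aux (a b : ℝ) (hA : -1 < a) (hb : 0 ≤ b) :
    IntegrableOn (fun z : ℝ => z ^ a * Real.exp (-(b * z))) (Set.Ioo (0:ℝ) 1) := by
  have h1 : IntegrableOn (fun z : ℝ => z ^ a) (Set.Ioo (0:ℝ) 1) :=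
    (intervalIntegral.intervalIntegrable_rpow' hA (a := 0) (b := 1)).1.mono_set Set.Ioo_subset_Ioc_self
  refine Integrable.mono' h1 ?_ ?_
  · exact (by fun_prop : Measurable fun z : ℝ => z ^ a * Real.exp (-(b * z))).aestronglyMeasurable
  · refine (ae_restrict_iff' measurableSet_Ioo).2 (ae_of_all _ fun z hz => ?_)
    have hz0 : 0 < z := hz.1
    have h2 : Real.exp (-(b * z)) ≤ 1 := Real.exp_le_one_iff.2 (by nlinarith)
    have h3 : 0 ≤ z ^ a := Real.rpow_nonneg hz0.le a
    rw [Real.norm_eq_abs, abs_of_nonneg (by positivity)]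
    nlinarith [Real.exp_pos (-(b*z))]

lemma pointwise_eq (κ τ c x : ℝ) (hx : 0 < x) {z : ℝ} (hz : z ∈ Set.Ioo (0:ℝ) 1) :
    betaPDF τ z * (z * gammaPDF κ c (z * x)) =
      (τ * c ^ κ * x ^ (κ - 1) / Real.Gamma κ) * (z ^ (κ + τ - 1) * Real.exp (-(c * x * z))) := by
  obtain ⟨hz0, hz1⟩ := hz
  unfold betaPDF gammaPDF
  rw [if_pos ⟨hz0, hz1⟩, if_pos (mul_pos hz0 hx)]
  have he : c * (z * x) = c * x * z := by ring
  rw [he, Real.mul_rpow hz0.le hx.le]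
  have hz3 : z ^ (τ - 1) * z ^ (κ - 1) * z = z ^ (κ + τ - 1) := by
    rw [← Real.rpow_add hz0, ← Real.rpow_add_one (ne_of_gt hz0)]
    congr 1; ring
  calc τ * z ^ (τ - 1) * (z * (c ^ κ * (z ^ (κ - 1) * x ^ (κ - 1)) * rexp (-(c * x * z)) / Gamma κ))
      = (z ^ (τ - 1) * z ^ (κ - 1) * z) * (τ * c ^ κ * x ^ (κ - 1) * rexp (-(c * x * z)) / Gamma κ) := by
        ring
    _ = _ := by rw [hz3]; ring

lemma key_integral (κ τ c x : ℝ) (hκ : 0 < κ) (hτ : 0 < τ) (hc : 0 < c) (hx : 0 < x) :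
    ∫ z in Set.Ioo (0:ℝ) 1, betaPDF τ z * (z * gammaPDF κ c (z * x)) = gbfryPDF κ τ c x := by
  have hΓ : 0 < Real.Gamma κ := Real.Gamma_pos_of_pos hκ
  have hcx : 0 < c * x := mul_pos hc hx
  set a : ℝ := κ + τ - 1 with ha
  -- step 1 : pointwise rewrite
  rw [setIntegral_congr_fun measurableSet_Ioo (fun z hz => pointwise_eq κ τ c x hx hz)]
  rw [MeasureTheory.integral_const_mul]
  -- J as interval integral
  have hIoo : ∫ z in Set.Ioo (0:ℝ) 1, z ^ a * Real.exp (-(c * x * z)) =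
      ∫ z in (0:ℝ)..1, z ^ a * Real.exp (-(c * x * z)) := by
    rw [intervalIntegral.integral_of_le zero_le_one, integral_Ioc_eq_integral_Ioo]
  -- substitution
  have hsub : ∫ z in (0:ℝ)..1, ((c * x) * z) ^ a * Real.exp (-((c * x) * z))
      = (c * x)⁻¹ • ∫ t in ((c*x)*0)..((c*x)*1), t ^ a * Real.exp (-t) :=
    intervalIntegral.integral_comp_mul_left (fun t => t ^ a * Real.exp (-t)) hcx.ne'
  have hpull : ∫ z in (0:ℝ)..1, ((c * x) * z) ^ a * Real.exp (-((c * x) * z))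
      = (c * x) ^ a * ∫ z in (0:ℝ)..1, z ^ a * Real.exp (-(c * x * z)) := by
    rw [← intervalIntegral.integral_const_mul]
    refine intervalIntegral.integral_congr (fun z hz => ?_)
    have hz0 : 0 ≤ z := by
      rcases Set.mem_uIcc.mp hz with h | h
      · exact h.1
      · linarith [h.1, h.2]
    rw [Real.mul_rpow hcx.le hz0]
    ring
  have hlow : lowerGamma (κ + τ) (c * x) = (c * x) ^ a * ((c * x) * ∫ z in (0:ℝ)..1, z ^ a * Real.exp (-(c * x * z))) := by
    have h0 : (c*x)*0 = (0:ℝ) := by ring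
    have h1 : (c*x)*1 = c*x := by ring
    rw [lowerGamma]
    have haa : (κ + τ - 1) = a := rfl
    rw [haa]
    rw [h0, h1, hpull, smul_eq_mul] at hsub
    have h2 : ∫ t in (0:ℝ)..(c*x), t ^ a * Real.exp (-t)
        = (c * x) * ((c * x) ^ a * ∫ z in (0:ℝ)..1, z ^ a * Real.exp (-(c * x * z))) := by
      rw [hsub]; field_simp
    rw [h2]; ring
  rw [hIoo, gbfryPDF, if_pos hx, hlow]
  have hcoef : τ * c ^ κ * x ^ (κ - 1) / Real.Gamma κ
      = τ / (c ^ τ * Real.Gamma κ) * x ^ (-1 - τ) * ((c * x) ^ a * (c * x)) := by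
    rw [Real.mul_rpow hc.le hx.le]
    have hcc : c ^ a * c / c ^ τ = c ^ κ := by
      rw [div_eq_iff (ne_of_gt (Real.rpow_pos_of_pos hc τ)),
        ← Real.rpow_add_one hc.ne', ← Real.rpow_add hc]
      congr 1; rw [ha]; ring
    have hxx : x ^ (-1 - τ) * x ^ a * x = x ^ (κ - 1) := by
      rw [← Real.rpow_add hx, ← Real.rpow_add_one hx.ne']
      congr 1; rw [ha]; ring
    rw [← hcc, ← hxx]
    field_simp
  rw [hcoef]
  ring

lemma integrableOn_main (κ τ c x : ℝ) (hκ : 0 < κ) (hτ : 0 < τ) (hc : 0 < c) (hx : 0 < x) :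
    IntegrableOn (fun z : ℝ => betaPDF τ z * (z * gammaPDF κ c (z * x))) (Set.Ioo (0:ℝ) 1) := by
  have h1 : IntegrableOn (fun z : ℝ => (τ * c ^ κ * x ^ (κ - 1) / Real.Gamma κ) *
      (z ^ (κ + τ - 1) * Real.exp (-(c * x * z)))) (Set.Ioo (0:ℝ) 1) := (integrableOn_aux (κ + τ - 1) (c * x) (by linarith) (by positivity)).const_mul
    (τ * c ^ κ * x ^ (κ - 1) / Real.Gamma κ)
  exact h1.congr_fun (fun z hz => (pointwise_eq κ τ c x hx hz).symm) measurableSet_Ioo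

theorem gbfry_as_gamma_over_beta (κ τ c : ℝ) (hκ : 0 < κ) (hτ : 0 < τ) (hc : 0 < c) :
    ((volume.withDensity (fun y => ENNReal.ofReal (gammaPDF κ c y))).prod
        (volume.withDensity (fun z => ENNReal.ofReal (betaPDF τ z)))).map
        (fun p : ℝ × ℝ => p.1 / p.2)
      = volume.withDensity (fun x => ENNReal.ofReal (gbfryPDF κ τ c x)) := by
  set f : ℝ → ℝ≥0∞ := fun y => ENNReal.ofReal (gammaPDF κ c y) with hf
  set g : ℝ → ℝ≥0∞ := fun z => ENNReal.ofReal (betaPDF τ z) with hg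
  set h : ℝ → ℝ≥0∞ := fun x => ENNReal.ofReal (gbfryPDF κ τ c x) with hh
  have hfm : Measurable f := (measurable_gammaPDF κ c).ennreal_ofReal
  have hgm : Measurable g := (measurable_betaPDF τ).ennreal_ofReal
  have hdiv : Measurable (fun p : ℝ × ℝ => p.1 / p.2) := measurable_fst.div measurable_snd
  ext s hs
  rw [Measure.map_apply hdiv hs, Measure.prod_apply_symm (hdiv hs),
    lintegral_withDensity_eq_lintegral_mul_non_measurable volume hgm
      (ae_of_all _ fun z => ENNReal.ofReal_lt_top)]
  simp only [Pi.mul_apply]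
  have step1 : ∀ z : ℝ,
      (volume.withDensity f) ((fun y => (y, z)) ⁻¹' ((fun p : ℝ × ℝ => p.1 / p.2) ⁻¹' s))
        = ∫⁻ y, f y * s.indicator 1 (y / z) := by
    intro z
    have hTm : MeasurableSet ((fun y : ℝ => y / z) ⁻¹' s) := (measurable_div_const z) hs
    have hT : ((fun y => (y, z)) ⁻¹' ((fun p : ℝ × ℝ => p.1 / p.2) ⁻¹' s))
        = (fun y : ℝ => y / z) ⁻¹' s := rfl
    rw [hT, withDensity_apply _ hTm, ← lintegral_indicator hTm]
    refine lintegral_congr fun y => ?_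
    by_cases hy : y / z ∈ s
    · simp [Set.indicator_of_mem, hy]
    · simp [hy]
  simp only [step1]
  calc
    ∫⁻ z, g z * ∫⁻ y, f y * s.indicator 1 (y / z)
        = ∫⁻ z in Set.Ioo (0:ℝ) 1, g z * ∫⁻ y, f y * s.indicator 1 (y / z) := by
      rw [← lintegral_indicator measurableSet_Ioo]
      refine lintegral_congr fun z => ?_
      by_cases hz : z ∈ Set.Ioo (0:ℝ) 1
      · rw [Set.indicator_of_mem hz]
      · have hb : betaPDF τ z = 0 := if_neg (by simpa [Set.mem_Ioo] using hz)
        rw [Set.indicator_of_notMem hz]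
        simp [hg, hb]
    _ = ∫⁻ z in Set.Ioo (0:ℝ) 1, ∫⁻ x', s.indicator 1 x' * (g z * ENNReal.ofReal z * f (z * x')) := by
      refine setLIntegral_congr_fun measurableSet_Ioo (fun z hz => ?_)
      have hz0 : (0:ℝ) < z := hz.1
      have hGm : Measurable fun y : ℝ => f y * s.indicator 1 (y / z) :=
        hfm.mul ((measurable_const.indicator hs).comp (measurable_div_const z))
      have hinner : ∫⁻ y, f y * s.indicator 1 (y / z)
          = ENNReal.ofReal z * ∫⁻ x', f (z * x') * s.indicator 1 x' := by
        calc ∫⁻ y, f y * s.indicator 1 (y / z)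
            = ∫⁻ y, f y * s.indicator 1 (y / z)
                ∂(ENNReal.ofReal |z| • Measure.map (z * ·) volume) := by
              rw [Real.smul_map_volume_mul_left hz0.ne']
          _ = ENNReal.ofReal |z| * ∫⁻ y, f y * s.indicator 1 (y / z)
                ∂(Measure.map (z * ·) volume) := lintegral_smul_measure _ _
          _ = ENNReal.ofReal z * ∫⁻ x', f (z * x') * s.indicator 1 ((z * x') / z) := by
              rw [lintegral_map hGm (measurable_const_mul z), abs_of_pos hz0]
          _ = ENNReal.ofReal z * ∫⁻ x', f (z * x') * s.indicator 1 x' := by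
              congr 1
              refine lintegral_congr fun x' => ?_
              rw [mul_div_cancel_left₀ _ hz0.ne']
      rw [hinner, ← mul_assoc, ← lintegral_const_mul' _ _ (by finiteness)]
      refine lintegral_congr fun x' => ?_
      ring
    _ = ∫⁻ x', ∫⁻ z in Set.Ioo (0:ℝ) 1, s.indicator 1 x' * (g z * ENNReal.ofReal z * f (z * x')) := by
      refine lintegral_lintegral_swap ?_
      apply Measurable.aemeasurable
      refine Measurable.mul ?_ ?_
      · exact (measurable_const.indicator hs).comp measurable_snd
      · exact ((hgm.comp measurable_fst).mul (measurable_fst.ennreal_ofReal)).mul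
          (hfm.comp (measurable_fst.mul measurable_snd))
    _ = ∫⁻ x', s.indicator 1 x' * ∫⁻ z in Set.Ioo (0:ℝ) 1, g z * ENNReal.ofReal z * f (z * x') := by
      refine lintegral_congr fun x' => ?_
      rw [lintegral_const_mul' _ _ (by by_cases hx' : x' ∈ s <;> simp [hx'])]
    _ = ∫⁻ x', s.indicator 1 x' * h x' := by
      refine lintegral_congr fun x' => ?_
      congr 1
      by_cases hx' : 0 < x'
      · calc ∫⁻ z in Set.Ioo (0:ℝ) 1, g z * ENNReal.ofReal z * f (z * x')
            = ∫⁻ z in Set.Ioo (0:ℝ) 1,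
                ENNReal.ofReal (betaPDF τ z * (z * gammaPDF κ c (z * x'))) := by
              refine setLIntegral_congr_fun measurableSet_Ioo (fun z hz => ?_)
              rw [hg, hf]
              rw [← ENNReal.ofReal_mul (betaPDF_nonneg hτ z),
                ← ENNReal.ofReal_mul (mul_nonneg (betaPDF_nonneg hτ z) hz.1.le)]
              rw [mul_assoc]
          _ = ENNReal.ofReal (∫ z in Set.Ioo (0:ℝ) 1, betaPDF τ z * (z * gammaPDF κ c (z * x'))) := by
              refine (ofReal_integral_eq_lintegral_ofReal
                (integrableOn_main κ τ c x' hκ hτ hc hx') ?_).symm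
              refine (ae_restrict_iff' measurableSet_Ioo).2 (ae_of_all _ fun z hz => ?_)
              exact mul_nonneg (betaPDF_nonneg hτ z)
                (mul_nonneg hz.1.le (gammaPDF_nonneg hκ hc _))
          _ = h x' := by rw [key_integral κ τ c x' hκ hτ hc hx']
      · have h0 : h x' = 0 := by simp [hh, gbfryPDF, if_neg hx']
        rw [h0]
        rw [show (0:ℝ≥0∞) = ∫⁻ _ in Set.Ioo (0:ℝ) 1, 0 ∂volume by simp]
        refine setLIntegral_congr_fun measurableSet_Ioo (fun z hz => ?_)
        have hγ : gammaPDF κ c (z * x') = 0 := by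
          rw [gammaPDF, if_neg]
          push_neg at hx' ⊢
          exact mul_nonpos_of_nonneg_of_nonpos hz.1.le hx'
        simp [hf, hγ]
    _ = (volume.withDensity h) s := by
      rw [withDensity_apply _ hs, ← lintegral_indicator hs]
      refine lintegral_congr fun x' => ?_
      by_cases hx' : x' ∈ s <;> simp [hx']
end
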